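/- Let v = v(z) be the unique formal power series with v(0)=0 satisfying z = v(1+v)^a (for a a positive integer). Then ∑_{n≥0} C(y-a(n-1), n) z^n = (1+v)^y · (1+v)^{a+1}/(1+(a+1)v) as formal power series in z, for any rational y. -/

import Mathlib

/-!
Substituting `v` into Mathlib's binomial series shows that `B y := binPow v y` satisfies
`B (y + z) = B y * B z` and `B d = (1 + v) ^ d`, so `B (y + 1) - B y = v * B y = X * B (y - a)`.
Hence, by induction on `n`, the coefficient `[z^n] B y` is the Lagrange inversion value
`y / n * C(y - a n - 1, n - 1)`: both are polynomials in `y` with the same forward difference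
and both vanish at `y = 0`, and a polynomial with zero forward difference is constant.
Finally `F y := B (y + a + 1) / (1 + (a + 1) v)` satisfies
`F y = B (y + a + 1) - (a + 1) X F (y - a)`, and the coefficients `C(y - a(n - 1), n)` satisfy
the same recursion in `n`.
-/

open PowerSeries Finset

/-- Generalized binomial coefficient `C(x,n) = x(x-1)⋯(x-n+1)/n!`. -/
noncomputable def gchoose (x : ℚ) (n : ℕ) : ℚ :=
  (∏ i ∈ Finset.range n, (x - i)) / n.factorial

/-- The binomial-series power `(1+w)^y := ∑_k C(y,k) w^k` of `1 + w`, for `w` a power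
series with zero constant term. -/
noncomputable def binPow (w : PowerSeries ℚ) (y : ℚ) : PowerSeries ℚ :=
  PowerSeries.mk fun n =>
    ∑ k ∈ Finset.range (n + 1), gchoose y k * PowerSeries.coeff n (w ^ k)

lemma gchoose_eq_eval_descPochhammer (x : ℚ) (n : ℕ) :
    gchoose x n = (descPochhammer ℚ n).eval x / n.factorial := by
  rw [gchoose, descPochhammer_eval_eq_prod_range]

lemma gchoose_eq_choose (x : ℚ) (n : ℕ) : gchoose x n = Ring.choose x n := by
  rw [Ring.choose_eq_smul, gchoose_eq_eval_descPochhammer, smul_eq_mul, div_eq_inv_mul,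
    ← Polynomial.aeval_eq_smeval, Polynomial.aeval_def, Polynomial.eval₂_eq_eval_map,
    descPochhammer_map]

lemma gchoose_zero (x : ℚ) : gchoose x 0 = 1 := by
  simp [gchoose]

lemma gchoose_succ (x : ℚ) (n : ℕ) :
    gchoose x (n + 1) = gchoose x n * (x - n) / (n + 1) := by
  rw [gchoose, gchoose, prod_range_succ, Nat.factorial_succ]
  push_cast
  field_simp

lemma gchoose_add_one_succ (x : ℚ) (n : ℕ) :
    gchoose (x + 1) (n + 1) = gchoose x n + gchoose x (n + 1) := by
  simp only [gchoose_eq_choose, Ring.choose_succ_succ]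

/-- Generalized binomial coefficient `C(x,n) = x(x-1)⋯(x-n+1)/n!`. -/
noncomputable def gchoosePoly (k : ℕ) : Polynomial ℚ :=
  Polynomial.C (k.factorial : ℚ)⁻¹ * descPochhammer ℚ k

@[simp]
lemma eval_gchoosePoly (k : ℕ) (x : ℚ) : (gchoosePoly k).eval x = gchoose x k := by
  rw [gchoosePoly, Polynomial.eval_mul, Polynomial.eval_C, gchoose_eq_eval_descPochhammer,
    inv_mul_eq_div]

theorem eq_of_fwdDiff_eq {R : Type*} [CommRing R] [IsDomain R] [CharZero R] {f g : R → R}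
    (hf : ∃ P : Polynomial R, ∀ y, f y = P.eval y)
    (hg : ∃ Q : Polynomial R, ∀ y, g y = Q.eval y)
    (hfg : fwdDiff 1 f = fwdDiff 1 g) (h0 : f 0 = g 0) : f = g := by
  obtain ⟨P, hP⟩ := hf
  obtain ⟨Q, hQ⟩ := hg
  have hroot : ∀ m : ℕ, (P - Q).IsRoot m := by
    intro m
    induction m with
    | zero => simpa [hP, hQ, sub_eq_zero] using h0
    | succ m ih =>
      have hm := congrFun hfg m
      simp only [fwdDiff, hP, hQ] at hm
      simp only [Polynomial.IsRoot, Polynomial.eval_sub, sub_eq_zero, Nat.cast_succ] at ih ⊢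
      linear_combination hm + ih
  have hPQ : P = Q := sub_eq_zero.1 <| Polynomial.eq_zero_of_infinite_isRoot _ <|
    Set.infinite_of_injective_forall_mem Nat.cast_injective hroot
  funext y
  rw [hP, hQ, hPQ]

lemma coeff_pow_eq_zero_of_lt {R : Type*} [CommRing R] {v : R⟦X⟧} (hv0 : constantCoeff v = 0)
    {n k : ℕ} (h : n < k) : coeff n (v ^ k) = 0 :=
  coeff_of_lt_order _ <|
    (ENat.natCast_lt_natCast.2 h).trans_le (le_order_pow_of_constantCoeff_eq_zero k hv0)

lemma binPow_eq_subst {v : ℚ⟦X⟧} (hv0 : constantCoeff v = 0) (y : ℚ) :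
    binPow v y = (PowerSeries.binomialSeries ℚ y).subst v := by
  ext n
  rw [coeff_subst' (HasSubst.of_constantCoeff_zero' hv0), binPow, coeff_mk,
    finsum_eq_sum_of_support_subset (s := range (n + 1))]
  · simp [gchoose_eq_choose]
  · intro k hk
    contrapose! hk
    simp [coeff_pow_eq_zero_of_lt hv0 (by simpa using hk)]

lemma binPow_add {v : ℚ⟦X⟧} (hv0 : constantCoeff v = 0) (y z : ℚ) :
    binPow v (y + z) = binPow v y * binPow v z := by
  simp only [binPow_eq_subst hv0, PowerSeries.binomialSeries_add,
    subst_mul (HasSubst.of_constantCoeff_zero' hv0)]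

lemma binPow_natCast {v : ℚ⟦X⟧} (hv0 : constantCoeff v = 0) (d : ℕ) :
    binPow v d = (1 + v) ^ d := by
  have hv := HasSubst.of_constantCoeff_zero' hv0
  rw [binPow_eq_subst hv0, PowerSeries.binomialSeries_nat, ← coe_substAlgHom hv, map_pow,
    map_add, map_one, coe_substAlgHom, subst_X hv]

lemma binPow_add_one {v : ℚ⟦X⟧} (hv0 : constantCoeff v = 0) (y : ℚ) :
    binPow v (y + 1) = (1 + v) * binPow v y := by
  rw [binPow_add hv0, mul_comm, ← Nat.cast_one, binPow_natCast hv0, pow_one]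

lemma v_mul_binPow {a : ℕ} {v : ℚ⟦X⟧} (hv0 : constantCoeff v = 0) (hv : X = v * (1 + v) ^ a)
    (y : ℚ) : v * binPow v y = X * binPow v (y - a) := by
  conv_lhs => rw [← sub_add_cancel y a, binPow_add hv0, binPow_natCast hv0]
  rw [hv]
  ring

lemma exists_polynomial_coeff_binPow (v : ℚ⟦X⟧) (n : ℕ) :
    ∃ P : Polynomial ℚ, ∀ y, coeff n (binPow v y) = P.eval y :=
  ⟨∑ k ∈ range (n + 1), Polynomial.C (coeff n (v ^ k)) * gchoosePoly k, fun y => by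
    simp [binPow, Polynomial.eval_finsetSum, mul_comm]⟩

noncomputable def lagrangeCoeff (a : ℕ) : ℕ → ℚ → ℚ
  | 0, _ => 1
  | n + 1, y => y / (n + 1) * gchoose (y - a * (n + 1) - 1) n

lemma exists_polynomial_lagrangeCoeff (a n : ℕ) :
    ∃ P : Polynomial ℚ, ∀ y, lagrangeCoeff a n y = P.eval y := by
  cases n with
  | zero => exact ⟨1, fun y => by simp [lagrangeCoeff]⟩
  | succ n =>
    refine ⟨Polynomial.C ((n : ℚ) + 1)⁻¹ * Polynomial.X *
      (gchoosePoly n).comp (Polynomial.X - Polynomial.C ((a : ℚ) * (n + 1) + 1)), fun y => ?_⟩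
    simp only [lagrangeCoeff, Polynomial.eval_mul, Polynomial.eval_C, Polynomial.eval_X,
      Polynomial.eval_comp, Polynomial.eval_sub, eval_gchoosePoly, sub_sub]
    ring

lemma fwdDiff_lagrangeCoeff (a n : ℕ) :
    fwdDiff 1 (lagrangeCoeff a (n + 1)) = fun y => lagrangeCoeff a n (y - a) := by
  funext y
  rw [fwdDiff]
  cases n with
  | zero => simp only [lagrangeCoeff, gchoose_zero]; ring
  | succ n =>
    simp only [lagrangeCoeff]
    set m : ℚ := y - a * (n + 1 + 1) - 1
    have h1 : y + 1 - a * ((n + 1 : ℕ) + 1) - 1 = m + 1 := by push_cast; ring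
    have h2 : y - a * ((n + 1 : ℕ) + 1) - 1 = m := by push_cast; ring
    have h3 : y - a - a * (n + 1) - 1 = m := by ring
    rw [h1, h2, h3, gchoose_add_one_succ, gchoose_succ]
    push_cast
    field_simp
    ring

lemma coeff_binPow_eq_lagrangeCoeff {a : ℕ} {v : ℚ⟦X⟧} (hv0 : constantCoeff v = 0)
    (hv : X = v * (1 + v) ^ a) (n : ℕ) (y : ℚ) :
    coeff n (binPow v y) = lagrangeCoeff a n y := by
  induction n generalizing y with
  | zero => simp [binPow, lagrangeCoeff, gchoose_zero]
  | succ n ih =>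
    suffices (fun y => coeff (n + 1) (binPow v y)) = lagrangeCoeff a (n + 1) from congrFun this y
    refine eq_of_fwdDiff_eq (exists_polynomial_coeff_binPow v _)
      (exists_polynomial_lagrangeCoeff a _) ?_ ?_
    · rw [fwdDiff_lagrangeCoeff]
      funext y
      rw [fwdDiff, ← map_sub, binPow_add_one hv0, ← sub_one_mul, add_sub_cancel_left,
        v_mul_binPow hv0 hv, coeff_succ_X_mul, ih]
    · have hB : binPow v 0 = 1 := by simpa using binPow_natCast hv0 0
      simp [hB, lagrangeCoeff]

lemma gchoose_eq_lagrangeCoeff_sub (a n : ℕ) (y : ℚ) :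
    gchoose (y - a * n) (n + 1) =
      lagrangeCoeff a (n + 1) (y + a + 1) - (a + 1) * gchoose (y - a * n) n := by
  have h : y + a + 1 - a * (n + 1) - 1 = y - a * n := by ring
  rw [lagrangeCoeff, h, gchoose_succ]
  field_simp
  ring

lemma binPow_mul_inv_eq {a : ℕ} {v : ℚ⟦X⟧} (hv0 : constantCoeff v = 0)
    (hv : X = v * (1 + v) ^ a) (y : ℚ) :
    binPow v (y + a + 1) * (1 + C ((a : ℚ) + 1) * v)⁻¹ =
      binPow v (y + a + 1) -
        C ((a : ℚ) + 1) * (X * (binPow v (y + 1) * (1 + C ((a : ℚ) + 1) * v)⁻¹)) := by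
  have hU : (1 + C ((a : ℚ) + 1) * v)⁻¹ * (1 + C ((a : ℚ) + 1) * v) = 1 :=
    PowerSeries.inv_mul_cancel _ (by simp [hv0])
  have hvB : v * binPow v (y + a + 1) = X * binPow v (y + 1) := by
    rw [v_mul_binPow hv0 hv]
    ring_nf
  linear_combination
    binPow v (y + a + 1) * hU - C ((a : ℚ) + 1) * (1 + C ((a : ℚ) + 1) * v)⁻¹ * hvB

lemma coeff_binPow_mul_inv {a : ℕ} {v : ℚ⟦X⟧} (hv0 : constantCoeff v = 0)
    (hv : X = v * (1 + v) ^ a) (n : ℕ) (y : ℚ) :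
    coeff n (binPow v (y + a + 1) * (1 + C ((a : ℚ) + 1) * v)⁻¹) =
      gchoose (y - a * (n - 1)) n := by
  induction n generalizing y with
  | zero =>
    have hB : constantCoeff (binPow v (y + a + 1)) = 1 := by
      simpa [lagrangeCoeff] using coeff_binPow_eq_lagrangeCoeff hv0 hv 0 (y + a + 1)
    simp [hB, hv0, gchoose_zero]
  | succ n ih =>
    rw [binPow_mul_inv_eq hv0 hv, map_sub, coeff_C_mul, coeff_succ_X_mul,
      show y + 1 = y - a + a + 1 by ring, ih, coeff_binPow_eq_lagrangeCoeff hv0 hv,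
      show y - a - a * (n - 1 : ℚ) = y - a * n by ring]
    push_cast
    rw [add_sub_cancel_right, gchoose_eq_lagrangeCoeff_sub]

theorem stmt6_general (a : ℕ) (y : ℚ) (v : PowerSeries ℚ)
    (hv0 : PowerSeries.constantCoeff v = 0)
    (hv : (PowerSeries.X : PowerSeries ℚ) = v * (1 + v) ^ a) :
    (PowerSeries.mk fun n => gchoose (y - (a : ℚ) * ((n : ℚ) - 1)) n) =
      binPow v y * (1 + v) ^ (a + 1) * (1 + PowerSeries.C ((a : ℚ) + 1) * v)⁻¹ := by
  ext n
  rw [← binPow_natCast hv0, ← binPow_add hv0, Nat.cast_add_one, ← add_assoc,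
    coeff_binPow_mul_inv hv0 hv, coeff_mk]

/-- If `v` is the formal power series with `v(0) = 0` satisfying `z = v(1+v)^a`
(`a` a positive integer), then
`∑_{n≥0} C(y-a(n-1),n) z^n = (1+v)^y · (1+v)^{a+1} / (1+(a+1)v)` for any rational `y`. -/
theorem stmt6 (a : ℕ) (ha : 0 < a) (y : ℚ) (v : PowerSeries ℚ)
    (hv0 : PowerSeries.constantCoeff v = 0)
    (hv : (PowerSeries.X : PowerSeries ℚ) = v * (1 + v) ^ a) :
    (PowerSeries.mk fun n => gchoose (y - (a : ℚ) * ((n : ℚ) - 1)) n) =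
      binPow v y * (1 + v) ^ (a + 1) * (1 + PowerSeries.C ((a : ℚ) + 1) * v)⁻¹ :=
  stmt6_general a y v hv0 hv
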